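/- Let L be a number field of degree d with ring of integers O_L, let 𝔭 be a prime ideal of O_L over a prime number p with p − 1 > d, and let β ∈ O_L satisfy β ≡ 1 (mod 𝔭), β ≠ 1. Then v_𝔭(β^p − 1) = v_𝔭(β − 1) + v_𝔭(p). -/
import Mathlib

noncomputable section

open NumberField UniqueFactorizationMonoid

/-- The `𝔭`-adic valuation of an ideal `I` of the ring of integers of a number
field: the exponent of the prime ideal `𝔭` in the prime factorization of `I`. -/
def idealVal {L : Type*} [Field L] [NumberField L]
    (𝔭 : Ideal (𝓞 L)) (I : Ideal (𝓞 L)) : ℕ :=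
  letI := Classical.decEq (Ideal (𝓞 L))
  Multiset.count 𝔭 (normalizedFactors I)

/-- The `𝔭`-adic valuation `v_𝔭(z)` of an element `z` of the ring of integers. -/
def elemVal {L : Type*} [Field L] [NumberField L]
    (𝔭 : Ideal (𝓞 L)) (z : 𝓞 L) : ℕ :=
  idealVal 𝔭 (Ideal.span {z})

lemma elemVal_mul {L : Type*} [Field L] [NumberField L]
    (𝔭 : Ideal (𝓞 L)) {a b : 𝓞 L} (ha : a ≠ 0) (hb : b ≠ 0) :
    elemVal 𝔭 (a * b) = elemVal 𝔭 a + elemVal 𝔭 b := by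
  classical
  unfold elemVal idealVal
  rw [← Ideal.span_singleton_mul_span_singleton,
    normalizedFactors_mul (by simpa using ha) (by simpa using hb), Multiset.count_add]

lemma elemVal_eq_of {L : Type*} [Field L] [NumberField L]
    (𝔭 : Ideal (𝓞 L)) [hp : 𝔭.IsPrime] {z : 𝓞 L} {n : ℕ}
    (h1 : z ∈ 𝔭 ^ n) (h2 : z ∉ 𝔭 ^ (n + 1)) : elemVal 𝔭 z = n := by
  classical
  unfold elemVal idealVal
  exact Ideal.count_normalizedFactors_eq ((Ideal.span_singleton_le_iff_mem _).mpr h1)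
    (fun h => h2 ((Ideal.span_singleton_le_iff_mem _).mp h))

lemma elemVal_spec {L : Type*} [Field L] [NumberField L]
    (𝔭 : Ideal (𝓞 L)) [hp : 𝔭.IsPrime] (h𝔭 : 𝔭 ≠ ⊥) {z : 𝓞 L} (hz : z ≠ 0) :
    z ∈ 𝔭 ^ (elemVal 𝔭 z) ∧ z ∉ 𝔭 ^ (elemVal 𝔭 z + 1) := by
  classical
  have hirr : Irreducible 𝔭 := (Ideal.prime_of_isPrime h𝔭 hp).irreducible
  have hspan : Ideal.span {z} ≠ (0 : Ideal (𝓞 L)) := by simpa using hz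
  have h := emultiplicity_eq_count_normalizedFactors hirr hspan
  rw [normalize_eq] at h
  have h2 : emultiplicity 𝔭 (Ideal.span {z}) = (elemVal 𝔭 z : ℕ∞) := by
    rw [h]; unfold elemVal idealVal; rfl
  obtain ⟨hle, hlt⟩ := emultiplicity_eq_coe.mp h2
  exact ⟨(Ideal.span_singleton_le_iff_mem _).mp (Ideal.le_of_dvd hle),
    fun h => hlt (Ideal.dvd_iff_le.mpr ((Ideal.span_singleton_le_iff_mem _).mpr h))⟩

/-- If `L` has degree `d`, `𝔭` is a prime ideal over a prime `p` with `p - 1 > d`, and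
`β ≡ 1 (mod 𝔭)`, `β ≠ 1`, then `v_𝔭(β^p - 1) = v_𝔭(β - 1) + v_𝔭(p)`. -/
theorem val_pow_p_sub_one
    {L : Type*} [Field L] [NumberField L] (d : ℕ) (hd : Module.finrank ℚ L = d)
    (𝔭 : Ideal (𝓞 L)) (hprime : 𝔭.IsPrime)
    (p : ℕ) (hp : p.Prime) (hover : (p : 𝓞 L) ∈ 𝔭) (hpd : d + 1 < p)
    (β : 𝓞 L) (hβ : β - 1 ∈ 𝔭) (hβne : β ≠ 1) :
    elemVal 𝔭 (β ^ p - 1) = elemVal 𝔭 (β - 1) + elemVal 𝔭 (p : 𝓞 L) := by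
  haveI := hprime
  set lam : 𝓞 L := β - 1 with hlam
  have hlam0 : lam ≠ 0 := sub_ne_zero.mpr hβne
  have hpL : (p : 𝓞 L) ≠ 0 := Nat.cast_ne_zero.mpr hp.ne_zero
  have h𝔭bot : 𝔭 ≠ ⊥ := by
    rintro rfl
    exact hpL (by simpa using hover)
  -- β ^ p ≠ 1
  have hβp : β ^ p ≠ 1 := by
    intro h
    have hb : (β : L) ^ p = 1 := by exact_mod_cast congrArg (algebraMap (𝓞 L) L) h
    have hbne : (β : L) ≠ 1 := by
      simpa using fun h' => hβne (RingOfIntegers.coe_injective (by simpa using h'))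
    have ho : orderOf (β : L) = p := by
      rcases (Nat.dvd_prime hp).mp (orderOf_dvd_of_pow_eq_one hb) with h1 | h1
      · exact absurd (orderOf_eq_one_iff.mp h1) hbne
      · exact h1
    have hprim : IsPrimitiveRoot (β : L) p := ho ▸ IsPrimitiveRoot.orderOf (β : L)
    have hirr : Irreducible (Polynomial.cyclotomic (Nat.lcm p p) ℚ) := by
      rw [Nat.lcm_self]; exact Polynomial.cyclotomic.irreducible_rat hp.pos
    have := IsPrimitiveRoot.lcm_totient_le_finrank hprim hprim hirr
    rw [Nat.lcm_self, Nat.totient_prime hp, hd] at this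
    omega
  have hβp0 : β ^ p - 1 ≠ 0 := sub_ne_zero.mpr hβp
  set e : ℕ := elemVal 𝔭 (p : 𝓞 L) with he
  obtain ⟨hpe, hpe'⟩ := elemVal_spec 𝔭 h𝔭bot hpL
  -- e ≤ d
  have hed : e ≤ d := by
    have habs : Ideal.absNorm (Ideal.span {(p : 𝓞 L)}) = p ^ d := by
      rw [Ideal.absNorm_span_singleton]
      have hcast : (p : 𝓞 L) = algebraMap ℤ (𝓞 L) (p : ℤ) := by simp
      rw [hcast, Algebra.norm_algebraMap_of_basis (RingOfIntegers.basis L),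
        ← Module.finrank_eq_card_chooseBasisIndex, RingOfIntegers.rank, hd, Int.natAbs_pow]
      simp
    have hdvd : (Ideal.absNorm 𝔭) ^ e ∣ p ^ d := by
      rw [← habs, ← map_pow]
      exact Ideal.absNorm_dvd_absNorm_of_le ((Ideal.span_singleton_le_iff_mem _).mpr hpe)
    have hdvd1 : Ideal.absNorm 𝔭 ∣ p ^ d := by
      rw [← habs]
      exact Ideal.absNorm_dvd_absNorm_of_le ((Ideal.span_singleton_le_iff_mem _).mpr hover)
    obtain ⟨f, hf, hfe⟩ := (Nat.dvd_prime_pow hp).mp hdvd1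
    have hf0 : f ≠ 0 := by
      rintro rfl
      rw [pow_zero] at hfe
      exact hprime.ne_top (Ideal.absNorm_eq_one_iff.mp hfe)
    rw [hfe, ← pow_mul] at hdvd
    have hfd := (Nat.pow_dvd_pow_iff_le_right hp.one_lt).mp hdvd
    calc e ≤ f * e := Nat.le_mul_of_pos_left e (Nat.pos_of_ne_zero hf0)
      _ ≤ d := hfd
  -- the geometric sum and its binomial expansion
  set S : 𝓞 L := ∑ i ∈ Finset.range p, β ^ i with hS
  have hgeom : lam * S = β ^ p - 1 := by
    rw [mul_comm, hlam]; exact geom_sum_mul β p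
  set T : 𝓞 L := ∑ k ∈ Finset.range p, lam ^ k * (p.choose (k + 1) : 𝓞 L) with hT
  have hST : S = T := by
    have hbin : β ^ p - 1 = lam * T := by
      have hβeq : β = lam + 1 := by rw [hlam]; ring
      rw [hβeq, add_pow]
      rw [Finset.sum_range_succ' (fun k => lam ^ k * 1 ^ (p - k) * (p.choose k : 𝓞 L)) p]
      simp only [pow_zero, one_pow, Nat.choose_zero_right, Nat.cast_one, mul_one, one_mul]
      rw [hT, Finset.mul_sum, add_sub_cancel_right]
      refine Finset.sum_congr rfl fun k _ => ?_
      ring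
    apply mul_left_cancel₀ hlam0
    rw [hgeom, hbin]
  -- T = p + higher order terms
  have hTsplit : T = (∑ k ∈ Finset.range (p - 1),
      lam ^ (k + 1) * (p.choose (k + 2) : 𝓞 L)) + (p : 𝓞 L) := by
    have hppred : p = (p - 1) + 1 := by omega
    have h' := Finset.sum_range_succ' (fun k => lam ^ k * (p.choose (k + 1) : 𝓞 L)) (p - 1)
    rw [← hppred] at h'
    rw [hT, h']
    simp
  set R : 𝓞 L := ∑ k ∈ Finset.range (p - 1), lam ^ (k + 1) * (p.choose (k + 2) : 𝓞 L) with hR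
  have hRmem : R ∈ 𝔭 ^ (e + 1) := by
    apply Ideal.sum_mem
    intro k hk
    rw [Finset.mem_range] at hk
    rcases lt_or_eq_of_le (by omega : k + 2 ≤ p) with hklt | hkeq
    · -- p divides choose
      obtain ⟨m, hm⟩ := hp.dvd_choose_self (by omega) hklt
      rw [hm]
      push_cast
      have h1 : lam ^ (k + 1) ∈ 𝔭 := by
        rw [pow_succ]
        exact Ideal.mul_mem_left _ _ hβ
      have h2 : lam ^ (k + 1) * (p : 𝓞 L) ∈ 𝔭 ^ (e + 1) := by
        have := Ideal.mul_mem_mul h1 hpe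
        rwa [← pow_succ'] at this
      rw [← mul_assoc]
      exact Ideal.mul_mem_right _ _ h2
    · -- k + 2 = p : term is lam ^ (p-1)
      have : p.choose (k + 2) = 1 := by rw [hkeq]; exact Nat.choose_self p
      rw [this]
      simp only [Nat.cast_one, mul_one]
      have hmem : lam ^ (k + 1) ∈ 𝔭 ^ (k + 1) := Ideal.pow_mem_pow hβ (k + 1)
      exact Ideal.pow_le_pow_right (by omega) hmem
  have hTe : T ∈ 𝔭 ^ e := by
    rw [hTsplit]
    exact Ideal.add_mem _ (Ideal.pow_le_pow_right (by omega) hRmem) hpe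
  have hTe' : T ∉ 𝔭 ^ (e + 1) := by
    intro h
    have hsub : T - R ∈ 𝔭 ^ (e + 1) := Ideal.sub_mem _ h hRmem
    have hTR : T - R = (p : 𝓞 L) := by rw [hTsplit]; ring
    exact hpe' (by rwa [hTR] at hsub)
  have hS0 : S ≠ 0 := by
    intro h
    apply hβp0
    rw [← hgeom, h, mul_zero]
  have hvS : elemVal 𝔭 S = e := by
    rw [hST]; exact elemVal_eq_of 𝔭 hTe hTe'
  rw [← hgeom, elemVal_mul 𝔭 hlam0 hS0, hvS]

end
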